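/- arXiv:2401.08879 — 3 statements merged into one kernel-verified Lean document; each statement's English description precedes it below -/
import Mathlib

section
/- The gradient-based contribution function ctrb^g satisfies the local faithfulness principle with respect to the QE semantics and with respect to the EB semantics: for every acyclic QBAG G and arguments a, x ∈ A there exists δ > 0 such that for all ε ∈ [τ(x) − δ, τ(x) + δ] ∩ [0,1], writing G_ε = G[x←ε]: if ctrb^g_{G,a}(x) < 0 then σ_G(a) < σ_{G_ε}(a) whenever ε < τ(x) and σ_G(a) > σ_{G_ε}(a) whenever ε > τ(x), and if ctrb^g_{G,a}(x) > 0 then σ_G(a) > σ_{G_ε}(a) whenever ε < τ(x) and σ_G(a) < σ_{G_ε}(a) whenever ε > τ(x). -/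
open Finset

/-- A quantitative bipolar argumentation graph (QBAG): a finite set of arguments,
an initial strength function, and attack and support relations. -/
structure QBAG where
  args : Finset ℕ
  tau : ℕ → ℝ
  att : Finset (ℕ × ℕ)
  supp : Finset (ℕ × ℕ)

namespace QBAG

/-- The edge relation of the underlying directed graph (attack or support). -/
def edge (G : QBAG) (x y : ℕ) : Prop := (x, y) ∈ G.att ∨ (x, y) ∈ G.supp

/-- Well-formedness: edges live on the arguments, attack and support are disjoint,
and initial strengths lie in [0,1]. -/
def WF (G : QBAG) : Prop :=
  (∀ p ∈ G.att, p.1 ∈ G.args ∧ p.2 ∈ G.args) ∧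
  (∀ p ∈ G.supp, p.1 ∈ G.args ∧ p.2 ∈ G.args) ∧
  Disjoint G.att G.supp ∧
  (∀ a ∈ G.args, G.tau a ∈ Set.Icc (0 : ℝ) 1)

/-- Acyclicity of the directed graph (A, Att ∪ Supp). -/
def Acyclic (G : QBAG) : Prop := ∀ x, ¬ Relation.TransGen G.edge x x

/-- Direct attackers of an argument. -/
def attackers (G : QBAG) (a : ℕ) : Finset ℕ :=
  (G.att.filter (fun p => p.2 = a)).image Prod.fst

/-- Direct supporters of an argument. -/
def supporters (G : QBAG) (a : ℕ) : Finset ℕ :=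
  (G.supp.filter (fun p => p.2 = a)).image Prod.fst

/-- Restriction G↓S of a QBAG to a subset S of the arguments. -/
def restrict (G : QBAG) (S : Finset ℕ) : QBAG where
  args := G.args ∩ S
  tau := G.tau
  att := G.att.filter (fun p => p.1 ∈ S ∧ p.2 ∈ S)
  supp := G.supp.filter (fun p => p.1 ∈ S ∧ p.2 ∈ S)

/-- G⁻: the QBAG G with every attack and support edge pointing into x removed. -/
def dropInto (G : QBAG) (x : ℕ) : QBAG where
  args := G.args
  tau := G.tau
  att := G.att.filter (fun p => p.2 ≠ x)
  supp := G.supp.filter (fun p => p.2 ≠ x)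

/-- G[x←ε]: the QBAG G with the initial strength of x replaced by ε. -/
def setTau (G : QBAG) (x : ℕ) (ε : ℝ) : QBAG where
  args := G.args
  tau := Function.update G.tau x ε
  att := G.att
  supp := G.supp

end QBAG

noncomputable section

/-- Sum aggregation. -/
def sumAgg (G : QBAG) (s : ℕ → ℝ) (a : ℕ) : ℝ :=
  (∑ y ∈ G.supporters a, s y) - (∑ y ∈ G.attackers a, s y)

/-- Product aggregation. -/
def prodAgg (G : QBAG) (s : ℕ → ℝ) (a : ℕ) : ℝ :=
  (∏ y ∈ G.attackers a, (1 - s y)) - (∏ y ∈ G.supporters a, (1 - s y))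

/-- Top aggregation. -/
def topAgg (G : QBAG) (s : ℕ → ℝ) (a : ℕ) : ℝ :=
  (G.supporters a).fold max 0 s - (G.attackers a).fold max 0 s

/-- h for the 2-Max(1) influence function. -/
def h2 (x : ℝ) : ℝ := max 0 x ^ 2 / (1 + max 0 x ^ 2)

/-- h for the 1-Max(1) influence function. -/
def h1 (x : ℝ) : ℝ := max 0 x / (1 + max 0 x)

/-- 2-Max(1) influence function (used by QE). -/
def iotaQE (w s : ℝ) : ℝ := w - w * h2 (-s) + (1 - w) * h2 s

/-- Linear(1) influence function (used by DFQuAD). -/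
def iotaLin (w s : ℝ) : ℝ := w - w * max 0 (-s) + (1 - w) * max 0 s

/-- 1-Max(1) influence function (used by SD-DFQuAD). -/
def iotaSD (w s : ℝ) : ℝ := w - w * h1 (-s) + (1 - w) * h1 s

/-- Euler-based influence function (used by EB and EBT). -/
def iotaEB (w s : ℝ) : ℝ := 1 - (1 - w ^ 2) / (1 + w * Real.exp s)

/-- σ is a modular semantics with aggregation `agg` and influence `iota`:
on every well-formed acyclic QBAG the final strengths satisfy the defining equations. -/
def IsSemantics (agg : QBAG → (ℕ → ℝ) → ℕ → ℝ) (iota : ℝ → ℝ → ℝ)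
    (σ : QBAG → ℕ → ℝ) : Prop :=
  ∀ G : QBAG, G.WF → G.Acyclic → ∀ a ∈ G.args, σ G a = iota (G.tau a) (agg G (σ G) a)

/-- QE semantics. -/
def IsQE (σ : QBAG → ℕ → ℝ) : Prop := IsSemantics sumAgg iotaQE σ

/-- DFQuAD semantics. -/
def IsDF (σ : QBAG → ℕ → ℝ) : Prop := IsSemantics prodAgg iotaLin σ

/-- SD-DFQuAD semantics. -/
def IsSD (σ : QBAG → ℕ → ℝ) : Prop := IsSemantics prodAgg iotaSD σ

/-- EB semantics. -/
def IsEB (σ : QBAG → ℕ → ℝ) : Prop := IsSemantics sumAgg iotaEB σ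

/-- EBT semantics. -/
def IsEBT (σ : QBAG → ℕ → ℝ) : Prop := IsSemantics topAgg iotaEB σ

/-- A gradual semantics assigns final strengths in [0,1] on acyclic QBAGs. -/
def IsGradualSemantics (σ : QBAG → ℕ → ℝ) : Prop :=
  ∀ G : QBAG, G.WF → G.Acyclic → ∀ a ∈ G.args, σ G a ∈ Set.Icc (0 : ℝ) 1

/-- Removal-based contribution: ctrb^r_{G,a}(x) = σ_G(a) − σ_{G↓(A∖{x})}(a). -/
def ctrbR (σ : QBAG → ℕ → ℝ) (G : QBAG) (a x : ℕ) : ℝ :=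
  σ G a - σ (G.restrict (G.args.erase x)) a

/-- Intrinsic-removal contribution: ctrb^{ri}_{G,a}(x) = σ_{G⁻}(a) − σ_{G↓(A∖{x})}(a). -/
def ctrbRI (σ : QBAG → ℕ → ℝ) (G : QBAG) (a x : ℕ) : ℝ :=
  σ (G.dropInto x) a - σ (G.restrict (G.args.erase x)) a

/-- Shapley-based contribution. -/
def ctrbS (σ : QBAG → ℕ → ℝ) (G : QBAG) (a x : ℕ) : ℝ :=
  ∑ X ∈ ((G.args.erase a).erase x).powerset,
    ((X.card.factorial : ℝ) * ((G.args.erase a).card - X.card - 1).factorial /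
      (G.args.erase a).card.factorial) *
    (σ (G.restrict (G.args \ X)) a - σ (G.restrict (G.args \ insert x X)) a)

/-- Gradient-based contribution: the derivative at ε = τ(x) (within [0,1]) of
the map ε ↦ σ_{G[x←ε]}(a). -/
def ctrbG (σ : QBAG → ℕ → ℝ) (G : QBAG) (a x : ℕ) : ℝ :=
  derivWithin (fun ε => σ (G.setTau x ε) a) (Set.Icc (0 : ℝ) 1) (G.tau x)

/-- The contribution existence principle. -/
def ContributionExistence (ctrb : QBAG → ℕ → ℕ → ℝ) (σ : QBAG → ℕ → ℝ) : Prop :=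
  ∀ G : QBAG, G.WF → G.Acyclic → ∀ a ∈ G.args,
    σ G a ≠ G.tau a → ∃ x ∈ G.args, x ≠ a ∧ ctrb G a x ≠ 0

/-- The quantitative contribution existence principle. -/
def QuantContributionExistence (ctrb : QBAG → ℕ → ℕ → ℝ) (σ : QBAG → ℕ → ℝ) : Prop :=
  ∀ G : QBAG, G.WF → G.Acyclic → ∀ a ∈ G.args,
    ∑ x ∈ G.args.erase a, ctrb G a x = σ G a - G.tau a

/-- The strong faithfulness principle. -/
def StrongFaithfulness (ctrb : QBAG → ℕ → ℕ → ℝ) (σ : QBAG → ℕ → ℝ) : Prop :=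
  ∀ G : QBAG, G.WF → G.Acyclic → ∀ a ∈ G.args, ∀ x ∈ G.args,
    ∀ ε ∈ Set.Icc (0 : ℝ) 1,
      (ctrb G a x < 0 →
        (ε < G.tau x → σ G a < σ (G.setTau x ε) a) ∧
        (ε > G.tau x → σ G a > σ (G.setTau x ε) a)) ∧
      (ctrb G a x = 0 → σ G a = σ (G.setTau x ε) a) ∧
      (ctrb G a x > 0 →
        (ε < G.tau x → σ G a > σ (G.setTau x ε) a) ∧
        (ε > G.tau x → σ G a < σ (G.setTau x ε) a))

/-- The local faithfulness principle. -/
def LocalFaithfulness (ctrb : QBAG → ℕ → ℕ → ℝ) (σ : QBAG → ℕ → ℝ) : Prop :=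
  ∀ G : QBAG, G.WF → G.Acyclic → ∀ a ∈ G.args, ∀ x ∈ G.args,
    ∃ δ > 0, ∀ ε ∈ Set.Icc (G.tau x - δ) (G.tau x + δ) ∩ Set.Icc (0 : ℝ) 1,
      (ctrb G a x < 0 →
        (ε < G.tau x → σ G a < σ (G.setTau x ε) a) ∧
        (ε > G.tau x → σ G a > σ (G.setTau x ε) a)) ∧
      (ctrb G a x > 0 →
        (ε < G.tau x → σ G a > σ (G.setTau x ε) a) ∧
        (ε > G.tau x → σ G a < σ (G.setTau x ε) a))

/-- The quantitative local faithfulness principle: the map ε ↦ σ_{G[x←ε]}(a) is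
differentiable (within [0,1]) at τ(x) with derivative ctrb_{G,a}(x); equivalently
σ_{G[x←τ(x)+ε]}(a) = σ_G(a) + ε·ctrb_{G,a}(x) + e(ε) with e(ε)/ε → 0. -/
def QuantLocalFaithfulness (ctrb : QBAG → ℕ → ℕ → ℝ) (σ : QBAG → ℕ → ℝ) : Prop :=
  ∀ G : QBAG, G.WF → G.Acyclic → ∀ a ∈ G.args, ∀ x ∈ G.args,
    HasDerivWithinAt (fun ε => σ (G.setTau x ε) a) (ctrb G a x)
      (Set.Icc (0 : ℝ) 1) (G.tau x)

/-- The counterfactuality principle. -/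
def Counterfactuality (ctrb : QBAG → ℕ → ℕ → ℝ) (σ : QBAG → ℕ → ℝ) : Prop :=
  ∀ G : QBAG, G.WF → G.Acyclic → ∀ a ∈ G.args, ∀ x ∈ G.args,
    (ctrb G a x < 0 → σ G a < σ (G.restrict (G.args.erase x)) a) ∧
    (ctrb G a x = 0 → σ G a = σ (G.restrict (G.args.erase x)) a) ∧
    (ctrb G a x > 0 → σ G a > σ (G.restrict (G.args.erase x)) a)

/-- The quantitative counterfactuality principle. -/
def QuantCounterfactuality (ctrb : QBAG → ℕ → ℕ → ℝ) (σ : QBAG → ℕ → ℝ) : Prop :=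
  ∀ G : QBAG, G.WF → G.Acyclic → ∀ a ∈ G.args, ∀ x ∈ G.args,
    ctrb G a x = σ G a - σ (G.restrict (G.args.erase x)) a

end

/-- The gradient-based contribution function satisfies local faithfulness
w.r.t. the QE semantics and w.r.t. the EB semantics. -/
theorem ctrbG_satisfies_local_faithfulness_QE_EB
    (σ : QBAG → ℕ → ℝ) (hσ : IsQE σ ∨ IsEB σ) :
    LocalFaithfulness (ctrbG σ) σ := by
  intro G hWF hAc a ha x hx
  set f : ℝ → ℝ := fun ε => σ (G.setTau x ε) a with hf
  set t : ℝ := G.tau x with ht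
  have hset : G.setTau x t = G := by
    cases G
    simp [QBAG.setTau, ht, Function.update_eq_self]
  have hft : f t = σ G a := by rw [hf]; simp [hset]
  have hctrb : ctrbG σ G a x = derivWithin f (Set.Icc (0:ℝ) 1) t := rfl
  by_cases hdiff : DifferentiableWithinAt ℝ f (Set.Icc (0:ℝ) 1) t
  · set d : ℝ := ctrbG σ G a x with hd
    by_cases hd0 : d = 0
    · refine ⟨1, one_pos, fun ε _ => ?_⟩
      constructor <;> intro h <;>
        · exfalso; rw [hd0] at h; exact lt_irrefl (0:ℝ) h
    · have hder : HasDerivWithinAt f d (Set.Icc (0:ℝ) 1) t := by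
        exact hctrb ▸ hdiff.hasDerivWithinAt
      have hslope := hasDerivWithinAt_iff_tendsto_slope.mp hder
      have habs : {ε : ℝ | |slope f t ε - d| < |d|} ∈
          nhdsWithin t (Set.Icc (0:ℝ) 1 \ {t}) := by
        have hball : Metric.ball d |d| ∈ nhds d :=
          Metric.ball_mem_nhds d (abs_pos.mpr hd0)
        have := hslope hball
        refine Filter.mem_of_superset this ?_
        intro y hy
        simpa [Metric.mem_ball, Real.dist_eq] using hy
      obtain ⟨δ, hδ, hsub⟩ := Metric.mem_nhdsWithin_iff.mp habs
      refine ⟨δ / 2, by positivity, fun ε hε => ?_⟩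
      obtain ⟨hε1, hε2⟩ := hε
      have key : ε ≠ t → |slope f t ε - d| < |d| := by
        intro hne
        apply hsub
        refine ⟨?_, hε2, hne⟩
        rw [Metric.mem_ball, Real.dist_eq]
        rcases hε1 with ⟨h1, h2⟩
        rw [abs_lt]
        constructor <;> linarith
      constructor
      · intro hdneg
        constructor <;> intro hεt
        · have hne : ε ≠ t := ne_of_lt hεt
          have hk := key hne
          have hs : slope f t ε < 0 := by
            have h1 : slope f t ε - d ≤ |slope f t ε - d| := le_abs_self _
            have h2 : |d| = -d := abs_of_neg hdneg
            linarith
          rw [slope_def_field] at hs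
          have hnum : 0 < f ε - f t := by
            rcases div_neg_iff.mp hs with ⟨h1, _⟩ | ⟨_, h2⟩
            · exact h1
            · exfalso; linarith
          rw [← hft]; linarith
        · have hne : ε ≠ t := ne_of_gt hεt
          have hk := key hne
          have hs : slope f t ε < 0 := by
            have h1 : slope f t ε - d ≤ |slope f t ε - d| := le_abs_self _
            have h2 : |d| = -d := abs_of_neg hdneg
            linarith
          rw [slope_def_field] at hs
          have hnum : f ε - f t < 0 := by
            rcases div_neg_iff.mp hs with ⟨_, h2⟩ | ⟨h1, _⟩
            · exfalso; linarith
            · exact h1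
          rw [← hft]; linarith
      · intro hdpos
        constructor <;> intro hεt
        · have hne : ε ≠ t := ne_of_lt hεt
          have hk := key hne
          have hs : 0 < slope f t ε := by
            have h1 : -(slope f t ε - d) ≤ |slope f t ε - d| := neg_le_abs _
            have h2 : |d| = d := abs_of_pos hdpos
            linarith
          rw [slope_def_field] at hs
          have hnum : f ε - f t < 0 := by
            rcases div_pos_iff.mp hs with ⟨_, h2⟩ | ⟨h1, _⟩
            · exfalso; linarith
            · exact h1
          rw [← hft]; linarith
        · have hne : ε ≠ t := ne_of_gt hεt
          have hk := key hne
          have hs : 0 < slope f t ε := by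
            have h1 : -(slope f t ε - d) ≤ |slope f t ε - d| := neg_le_abs _
            have h2 : |d| = d := abs_of_pos hdpos
            linarith
          rw [slope_def_field] at hs
          have hnum : 0 < f ε - f t := by
            rcases div_pos_iff.mp hs with ⟨h1, _⟩ | ⟨_, h2⟩
            · exact h1
            · exfalso; linarith
          rw [← hft]; linarith
  · refine ⟨1, one_pos, fun ε _ => ?_⟩
    have h0 : ctrbG σ G a x = 0 :=
      derivWithin_zero_of_not_differentiableWithinAt hdiff
    constructor <;> intro h <;>
      · exfalso; rw [h0] at h; exact lt_irrefl (0:ℝ) h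
end

section
/- The removal-based contribution function ctrb^r and the intrinsic-removal contribution function ctrb^{ri} violate the local faithfulness principle with respect to the DFQuAD semantics: there exist an acyclic QBAG G and arguments a, x ∈ A with ctrb^r_{G,a}(x) = ctrb^{ri}_{G,a}(x) > 0 such that for every δ > 0 there is ε ∈ [τ(x) − δ, τ(x) + δ] ∩ [0,1] with ε > τ(x) and σ_{G[x←ε]}(a) ≥ σ_G(a) (so the defining condition of local faithfulness fails). (A witness is the QBAG with A = {a, b, c, d}, τ(a) = 1, τ(b) = 0.7, τ(c) = 0.6, τ(d) = 0.8, support (b,a), and attacks (c,a), (c,b), (d,b), (d,c), where ctrb^r_{G,a}(d) = ctrb^{ri}_{G,a}(d) = 0.32 but increasing τ(d) does not increase σ_G(a).) -/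
open Finset

/- ======================= auxiliary material ======================= -/

/-- initial strengths of the witness graph -/
noncomputable def tauW : ℕ → ℝ :=
  fun n => if n = 0 then 1 else if n = 1 then 0.7 else if n = 2 then 0.6 else
    if n = 3 then 0.8 else 0

/-- the witness graph -/
noncomputable def Gw : QBAG :=
  ⟨{0, 1, 2, 3}, tauW, {(2,0), (2,1), (3,1), (3,2)}, {(1,0)}⟩

lemma acyclic_of_lt (G : QBAG) (h : ∀ x y, G.edge x y → y < x) : G.Acyclic := by
  intro x hx
  have key : ∀ a b, Relation.TransGen G.edge a b → b < a := by
    intro a b hab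
    induction hab with
    | single h' => exact h _ _ h'
    | tail _ h' ih => exact lt_trans (h _ _ h') ih
  exact absurd (key x x hx) (lt_irrefl x)

lemma iotaLin_nonneg (w s : ℝ) (hs : 0 ≤ s) : iotaLin w s = w + (1 - w) * s := by
  have h1 : max 0 (-s) = 0 := max_eq_left (by linarith)
  have h2 : max 0 s = s := max_eq_right hs
  simp [iotaLin, h1, h2]

lemma iotaLin_nonpos (w s : ℝ) (hs : s ≤ 0) : iotaLin w s = w + w * s := by
  have h1 : max 0 (-s) = -s := max_eq_right (by linarith)
  have h2 : max 0 s = 0 := max_eq_left hs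
  simp [iotaLin, h1, h2]

noncomputable def Hw (t : ℕ → ℝ) : QBAG :=
  QBAG.mk {0, 1, 2, 3} t {(2,0), (2,1), (3,1), (3,2)} {(1,0)}

lemma Hw_args (t : ℕ → ℝ) : (Hw t).args = {0, 1, 2, 3} := rfl
lemma Hw_att (t : ℕ → ℝ) : (Hw t).att = {(2,0), (2,1), (3,1), (3,2)} := rfl
lemma Hw_supp (t : ℕ → ℝ) : (Hw t).supp = {(1,0)} := rfl
lemma Hw_tau (t : ℕ → ℝ) : (Hw t).tau = t := rfl

/-- Main computation for any graph of the witness shape whose strength of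
argument 3 lies in [0.8, 0.9]: final strength of the topic argument is 1. -/
lemma sigmaW_top (σ : QBAG → ℕ → ℝ) (hσ : IsDF σ) (t : ℕ → ℝ)
    (h0 : t 0 = 1) (h1 : t 1 = 0.7) (h2 : t 2 = 0.6)
    (hlo : (0.8 : ℝ) ≤ t 3) (hhi : t 3 ≤ 0.9) :
    σ (Hw t) 0 = 1 := by
  set H : QBAG := Hw t with hH
  have hWF : H.WF := by
    refine ⟨?_, ?_, ?_, ?_⟩
    · simp only [hH, Hw_att, Hw_args]; decide
    · simp only [hH, Hw_supp, Hw_args]; decide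
    · rw [hH, Hw_att, Hw_supp]; decide
    · intro a ha
      rw [hH, Hw_args] at ha
      rw [hH, Hw_tau]
      fin_cases ha
      · rw [h0]; constructor <;> norm_num
      · rw [h1]; constructor <;> norm_num
      · rw [h2]; constructor <;> norm_num
      · constructor <;> [linarith; linarith]
  have hAc : H.Acyclic := by
    apply acyclic_of_lt
    intro x y hxy
    rcases hxy with hxy | hxy <;>
      simp only [hH, Hw_att, Hw_supp, Finset.mem_insert, Finset.mem_singleton,
        Prod.mk.injEq] at hxy <;>
      omega
  have ha3 : H.attackers 3 = ∅ := by rw [QBAG.attackers, hH, Hw_att]; decide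
  have hs3 : H.supporters 3 = ∅ := by rw [QBAG.supporters, hH, Hw_supp]; decide
  have ha2 : H.attackers 2 = {3} := by rw [QBAG.attackers, hH, Hw_att]; decide
  have hs2 : H.supporters 2 = ∅ := by rw [QBAG.supporters, hH, Hw_supp]; decide
  have ha1 : H.attackers 1 = {2, 3} := by rw [QBAG.attackers, hH, Hw_att]; decide
  have hs1 : H.supporters 1 = ∅ := by rw [QBAG.supporters, hH, Hw_supp]; decide
  have ha0 : H.attackers 0 = {2} := by rw [QBAG.attackers, hH, Hw_att]; decide
  have hs0 : H.supporters 0 = {1} := by rw [QBAG.supporters, hH, Hw_supp]; decide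
  have htau : H.tau = t := by rw [hH, Hw_tau]
  have hm : ∀ n, n ∈ ({0,1,2,3} : Finset ℕ) → n ∈ H.args := by
    intro n hn; rwa [hH, Hw_args]
  -- σ H 3
  have e3 : σ H 3 = t 3 := by
    have := hσ H hWF hAc 3 (hm 3 (by decide))
    rw [this, htau, prodAgg, ha3, hs3]
    simp [iotaLin]
  -- σ H 2
  have e2 : σ H 2 = 0.6 - 0.6 * t 3 := by
    have := hσ H hWF hAc 2 (hm 2 (by decide))
    rw [this, htau, prodAgg, ha2, hs2, Finset.prod_singleton, Finset.prod_empty, e3, h2,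
      iotaLin_nonpos _ _ (by linarith)]
    ring
  -- σ H 1
  have e1 : σ H 1 = 0.7 * ((0.4 + 0.6 * t 3) * (1 - t 3)) := by
    have := hσ H hWF hAc 1 (hm 1 (by decide))
    rw [this, htau, prodAgg, ha1, hs1, Finset.prod_empty,
      Finset.prod_insert (by decide), Finset.prod_singleton, e2, e3, h1,
      iotaLin_nonpos _ _ (by nlinarith)]
    ring
  -- σ H 0
  have := hσ H hWF hAc 0 (hm 0 (by decide))
  rw [this, htau, prodAgg, ha0, hs0, Finset.prod_singleton, Finset.prod_singleton, e1, e2, h0,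
    iotaLin_nonneg _ _ (by nlinarith)]
  ring

lemma sigmaW_Gw (σ : QBAG → ℕ → ℝ) (hσ : IsDF σ) : σ Gw 0 = 1 := by
  have h : Gw = Hw tauW := rfl
  rw [h]
  have := sigmaW_top σ hσ tauW (by norm_num [tauW]) (by norm_num [tauW])
    (by norm_num [tauW]) (by norm_num [tauW]) (by norm_num [tauW])
  exact this

lemma sigmaW_setTau (σ : QBAG → ℕ → ℝ) (hσ : IsDF σ) (ε : ℝ)
    (hlo : (0.8 : ℝ) ≤ ε) (hhi : ε ≤ 0.9) :
    σ (Gw.setTau 3 ε) 0 = 1 := by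
  have h : Gw.setTau 3 ε = Hw (Function.update tauW 3 ε) := rfl
  rw [h]
  exact sigmaW_top σ hσ _
    (by rw [Function.update_of_ne (by norm_num)]; norm_num [tauW])
    (by rw [Function.update_of_ne (by norm_num)]; norm_num [tauW])
    (by rw [Function.update_of_ne (by norm_num)]; norm_num [tauW])
    (by rw [Function.update_self]; exact hlo)
    (by rw [Function.update_self]; exact hhi)

/-- The restricted graph (argument 3 removed) gives strength 0.68 to the topic. -/
lemma sigmaW_restrict (σ : QBAG → ℕ → ℝ) (hσ : IsDF σ) :
    σ (Gw.restrict (Gw.args.erase 3)) 0 = 0.68 := by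
  set H : QBAG := Gw.restrict (Gw.args.erase 3) with hH
  have htau : H.tau = tauW := rfl
  have hWF : H.WF := by
    refine ⟨by decide, by decide, by decide, ?_⟩
    intro a ha
    have : a ∈ ({0, 1, 2} : Finset ℕ) := by
      have hargs : H.args = {0, 1, 2} := by decide
      rwa [hargs] at ha
    fin_cases this <;> rw [htau] <;> norm_num [tauW]
  have hAc : H.Acyclic := by
    apply acyclic_of_lt
    intro x y hxy
    have hatt : H.att = {(2,0), (2,1)} := by decide
    have hsupp : H.supp = {(1,0)} := by decide
    rcases hxy with hxy | hxy
    · rw [hatt] at hxy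
      simp only [Finset.mem_insert, Finset.mem_singleton, Prod.mk.injEq] at hxy
      omega
    · rw [hsupp] at hxy
      simp only [Finset.mem_singleton, Prod.mk.injEq] at hxy
      omega
  have ha2 : H.attackers 2 = ∅ := by decide
  have hs2 : H.supporters 2 = ∅ := by decide
  have ha1 : H.attackers 1 = {2} := by decide
  have hs1 : H.supporters 1 = ∅ := by decide
  have ha0 : H.attackers 0 = {2} := by decide
  have hs0 : H.supporters 0 = {1} := by decide
  have e2 : σ H 2 = 0.6 := by
    have := hσ H hWF hAc 2 (by decide)
    rw [this, htau, prodAgg, ha2, hs2]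
    simp [iotaLin, tauW]
  have e1 : σ H 1 = 0.28 := by
    have := hσ H hWF hAc 1 (by decide)
    rw [this, htau, prodAgg, ha1, hs1, Finset.prod_singleton, Finset.prod_empty, e2,
      iotaLin_nonpos _ _ (by norm_num)]
    norm_num [tauW]
  have := hσ H hWF hAc 0 (by decide)
  rw [this, htau, prodAgg, ha0, hs0, Finset.prod_singleton, Finset.prod_singleton, e1, e2,
    iotaLin_nonpos _ _ (by norm_num)]
  norm_num [tauW]

lemma dropInto_Gw : Gw.dropInto 3 = Gw := by
  show QBAG.mk _ _ _ _ = QBAG.mk _ _ _ _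
  congr 1

lemma Gw_WF : Gw.WF := by
  refine ⟨by decide, by decide, by decide, ?_⟩
  intro a ha
  fin_cases ha <;> norm_num [Gw, tauW]

lemma Gw_Acyclic : Gw.Acyclic := by
  apply acyclic_of_lt
  intro x y hxy
  rcases hxy with hxy | hxy <;>
    simp only [Gw, Finset.mem_insert, Finset.mem_singleton, Prod.mk.injEq] at hxy <;>
    omega

lemma Gw_tau3 : Gw.tau 3 = 0.8 := by norm_num [Gw, tauW]

lemma ctrbR_Gw (σ : QBAG → ℕ → ℝ) (hσ : IsDF σ) : ctrbR σ Gw 0 3 = 0.32 := by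
  rw [ctrbR, sigmaW_Gw σ hσ, sigmaW_restrict σ hσ]
  norm_num

lemma ctrbRI_Gw (σ : QBAG → ℕ → ℝ) (hσ : IsDF σ) : ctrbRI σ Gw 0 3 = 0.32 := by
  rw [ctrbRI, dropInto_Gw, sigmaW_Gw σ hσ, sigmaW_restrict σ hσ]
  norm_num

/-- For every δ > 0 there is an admissible ε > τ(3) with unchanged topic strength. -/
lemma Gw_counterexample (σ : QBAG → ℕ → ℝ) (hσ : IsDF σ) :
    ∀ δ > (0:ℝ), ∃ ε ∈ Set.Icc (Gw.tau 3 - δ) (Gw.tau 3 + δ) ∩ Set.Icc (0 : ℝ) 1,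
      Gw.tau 3 < ε ∧ σ (Gw.setTau 3 ε) 0 ≥ σ Gw 0 ∧
      ¬ (σ Gw 0 < σ (Gw.setTau 3 ε) 0) := by
  intro δ hδ
  refine ⟨min (0.8 + δ) 0.9, ?_, ?_, ?_, ?_⟩
  · rw [Gw_tau3]
    constructor
    · constructor
      · rcases le_total (0.8 + δ) 0.9 with h | h
        · rw [min_eq_left h]; linarith
        · rw [min_eq_right h]; linarith
      · exact le_trans (min_le_left _ _) (le_refl _)
    · constructor
      · rcases le_total (0.8 + δ) 0.9 with h | h
        · rw [min_eq_left h]; linarith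
        · rw [min_eq_right h]; linarith
      · exact le_trans (min_le_right _ _) (by norm_num)
  · rw [Gw_tau3]
    apply lt_min <;> linarith
  · have hlo : (0.8:ℝ) ≤ min (0.8 + δ) 0.9 := le_min (by linarith) (by norm_num)
    have hhi : min (0.8 + δ) 0.9 ≤ (0.9:ℝ) := min_le_right _ _
    rw [sigmaW_setTau σ hσ _ hlo hhi, sigmaW_Gw σ hσ]
  · have hlo : (0.8:ℝ) ≤ min (0.8 + δ) 0.9 := le_min (by linarith) (by norm_num)
    have hhi : min (0.8 + δ) 0.9 ≤ (0.9:ℝ) := min_le_right _ _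
    rw [sigmaW_setTau σ hσ _ hlo hhi, sigmaW_Gw σ hσ]
    exact lt_irrefl 1

/-- ctrb^r and ctrb^{ri} violate local faithfulness w.r.t. the DFQuAD
semantics: there exist an acyclic QBAG G and a, x ∈ A with
ctrb^r_{G,a}(x) = ctrb^{ri}_{G,a}(x) > 0 such that for every δ > 0 there is
ε ∈ [τ(x) − δ, τ(x) + δ] ∩ [0,1] with ε > τ(x) and σ_{G[x←ε]}(a) ≥ σ_G(a), so the
defining condition of local faithfulness (σ_G(a) < σ_{G[x←ε]}(a)) fails. -/
theorem ctrbR_ctrbRI_violate_local_faithfulness_DF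
    (σ : QBAG → ℕ → ℝ) (hσ : IsDF σ) :
    ¬ LocalFaithfulness (ctrbR σ) σ ∧
    ¬ LocalFaithfulness (ctrbRI σ) σ ∧
    ∃ G : QBAG, G.WF ∧ G.Acyclic ∧ ∃ a ∈ G.args, ∃ x ∈ G.args,
      ctrbR σ G a x = ctrbRI σ G a x ∧ 0 < ctrbR σ G a x ∧
      ∀ δ > 0, ∃ ε ∈ Set.Icc (G.tau x - δ) (G.tau x + δ) ∩ Set.Icc (0 : ℝ) 1,
        G.tau x < ε ∧ σ (G.setTau x ε) a ≥ σ G a ∧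
        ¬ (σ G a < σ (G.setTau x ε) a) := by
  have hR := ctrbR_Gw σ hσ
  have hRI := ctrbRI_Gw σ hσ
  have hcex := Gw_counterexample σ hσ
  refine ⟨?_, ?_, Gw, Gw_WF, Gw_Acyclic, 0, by decide, 3, by decide, ?_, ?_, hcex⟩
  · intro h
    obtain ⟨δ, hδ, hall⟩ := h Gw Gw_WF Gw_Acyclic 0 (by decide) 3 (by decide)
    obtain ⟨ε, hε, hlt, _, hnot⟩ := hcex δ hδ
    exact hnot (((hall ε hε).2 (by rw [hR]; norm_num)).2 hlt)
  · intro h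
    obtain ⟨δ, hδ, hall⟩ := h Gw Gw_WF Gw_Acyclic 0 (by decide) 3 (by decide)
    obtain ⟨ε, hε, hlt, _, hnot⟩ := hcex δ hδ
    exact hnot (((hall ε hε).2 (by rw [hRI]; norm_num)).2 hlt)
  · rw [hR, hRI]
  · rw [hR]; norm_num
end

section
/- The Shapley-based contribution function ctrb^s violates the local faithfulness principle with respect to the DFQuAD semantics: there exist an acyclic QBAG G and arguments a, x ∈ A with ctrb^s_{G,a}(x) < 0 such that for every δ > 0 there is ε ∈ [τ(x) − δ, τ(x) + δ] ∩ [0,1] violating the defining condition of local faithfulness. (A witness is the QBAG with A = {a, b, c, d, e}, τ(a) = τ(e) = 0.5, τ(b) = τ(c) = τ(d) = 0, support (b,a), attacks (c,a), (d,a), and supports (e,b), (e,c), (e,d), where ctrb^s_{G,a}(e) = −1/12 < 0 but increasing τ(e) above 0.5 increases σ_G(a).) -/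
open Finset

/-! In the counterexample, `e` supports the supporter `b` of `a` and both of its attackers `c, d`
equally, so with `τ(e) = ε` the aggregate at `a` is `(1 - ε)² - (1 - ε) ≤ 0` and
`σ(a) = 3/8 + (ε - 1/2)²/2`. This has a strict minimum at `τ(e) = 1/2`, so moving `τ(e)` in
either direction raises `σ(a)`. Yet the Shapley contribution of `e`, averaged over the eight
coalitions of `{b, c, d}`, is `-1/12 < 0`, and local faithfulness would force `σ(a)` to decrease
when `τ(e)` increases. -/

namespace QBAG

variable {G : QBAG} {S : Finset ℕ} {a x : ℕ} {ε : ℝ}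

@[simp] theorem attackers_setTau : (G.setTau x ε).attackers a = G.attackers a := rfl

@[simp] theorem supporters_setTau : (G.setTau x ε).supporters a = G.supporters a := rfl

@[simp] theorem args_setTau : (G.setTau x ε).args = G.args := rfl

theorem tau_setTau : (G.setTau x ε).tau = Function.update G.tau x ε := rfl

@[simp] theorem tau_restrict : (G.restrict S).tau = G.tau := rfl

theorem attackers_restrict (ha : a ∈ S) : (G.restrict S).attackers a = G.attackers a ∩ S := by
  ext y
  simp only [attackers, restrict, mem_image, mem_filter, mem_inter, Prod.exists]
  aesop

theorem supporters_restrict (ha : a ∈ S) :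
    (G.restrict S).supporters a = G.supporters a ∩ S := by
  ext y
  simp only [supporters, restrict, mem_image, mem_filter, mem_inter, Prod.exists]
  aesop

theorem setTau_tau_self (G : QBAG) (x : ℕ) : G.setTau x (G.tau x) = G := by
  simp [setTau]

theorem WF.restrict (h : G.WF) (S : Finset ℕ) : (G.restrict S).WF := by
  obtain ⟨hatt, hsupp, hdisj, htau⟩ := h
  refine ⟨?_, ?_, disjoint_filter_filter hdisj, fun a ha => htau a (mem_inter.1 ha).1⟩
  · intro p hp
    obtain ⟨hp, hS⟩ := mem_filter.1 hp
    exact ⟨mem_inter.2 ⟨(hatt p hp).1, hS.1⟩, mem_inter.2 ⟨(hatt p hp).2, hS.2⟩⟩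
  · intro p hp
    obtain ⟨hp, hS⟩ := mem_filter.1 hp
    exact ⟨mem_inter.2 ⟨(hsupp p hp).1, hS.1⟩, mem_inter.2 ⟨(hsupp p hp).2, hS.2⟩⟩

theorem WF.restrict_args (h : G.WF) : G.restrict G.args = G := by
  obtain ⟨hatt, hsupp, -, -⟩ := h
  simp only [QBAG.restrict, inter_self, filter_true_of_mem hatt, filter_true_of_mem hsupp]

theorem WF.setTau (h : G.WF) (hε : ε ∈ Set.Icc (0 : ℝ) 1) : (G.setTau x ε).WF := by
  obtain ⟨hatt, hsupp, hdisj, htau⟩ := h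
  refine ⟨hatt, hsupp, hdisj, fun a ha => ?_⟩
  rcases eq_or_ne a x with rfl | hax
  · simpa [QBAG.setTau] using hε
  · simpa [QBAG.setTau, hax] using htau a ha

theorem acyclic_of_rank (f : ℕ → ℕ) (hf : ∀ x y, G.edge x y → f x < f y) : G.Acyclic := by
  intro x hx
  have hlt : ∀ y, Relation.TransGen G.edge x y → f x < f y := by
    intro y h
    induction h with
    | single h => exact hf _ _ h
    | tail _ h ih => exact ih.trans (hf _ _ h)
  exact lt_irrefl _ (hlt x hx)

theorem Acyclic.restrict (h : G.Acyclic) (S : Finset ℕ) : (G.restrict S).Acyclic := by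
  refine fun x hx => h x (Relation.TransGen.mono (fun y z hyz => ?_) x x hx)
  rcases hyz with hyz | hyz
  · exact Or.inl (mem_filter.1 hyz).1
  · exact Or.inr (mem_filter.1 hyz).1

theorem Acyclic.setTau (h : G.Acyclic) : (G.setTau x ε).Acyclic := h

end QBAG

theorem iotaLin_zero_right (w : ℝ) : iotaLin w 0 = w := by
  simp [iotaLin]

theorem iotaLin_zero_left (s : ℝ) : iotaLin 0 s = max 0 s := by
  simp [iotaLin]

theorem iotaLin_of_nonpos (w : ℝ) {s : ℝ} (hs : s ≤ 0) : iotaLin w s = w * (1 + s) := by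
  rw [iotaLin, max_eq_right (neg_nonneg.2 hs), max_eq_left hs]
  ring

theorem IsDF.apply_restrict {σ : QBAG → ℕ → ℝ} (hσ : IsDF σ) {G : QBAG} (hG : G.WF)
    (hGc : G.Acyclic) {S : Finset ℕ} {a : ℕ} (ha : a ∈ G.args) (haS : a ∈ S) :
    σ (G.restrict S) a = iotaLin (G.tau a)
      ((∏ y ∈ G.attackers a ∩ S, (1 - σ (G.restrict S) y)) -
        ∏ y ∈ G.supporters a ∩ S, (1 - σ (G.restrict S) y)) := by
  rw [hσ _ (hG.restrict S) (hGc.restrict S) a (mem_inter.2 ⟨ha, haS⟩), prodAgg,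
    QBAG.attackers_restrict haS, QBAG.supporters_restrict haS, QBAG.tau_restrict]

theorem exists_gt_mem_Icc_inter_unitInterval {t δ : ℝ} (ht₀ : 0 ≤ t) (ht₁ : t < 1)
    (hδ : 0 < δ) : ∃ ε ∈ Set.Icc (t - δ) (t + δ) ∩ Set.Icc (0 : ℝ) 1, t < ε := by
  refine ⟨min (t + δ) 1, ⟨⟨?_, min_le_left _ _⟩, ?_, min_le_right _ _⟩,
    lt_min (by linarith) ht₁⟩
  · exact le_min (by linarith) (by linarith)
  · exact le_min (by linarith) zero_le_one

theorem not_localFaithfulness_of_exists_violation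
    {ctrb : QBAG → ℕ → ℕ → ℝ} {σ : QBAG → ℕ → ℝ} {G : QBAG} (hG : G.WF) (hGc : G.Acyclic)
    {a x : ℕ} (ha : a ∈ G.args) (hx : x ∈ G.args) (hneg : ctrb G a x < 0)
    (hviol : ∀ δ > 0, ∃ ε ∈ Set.Icc (G.tau x - δ) (G.tau x + δ) ∩ Set.Icc (0 : ℝ) 1,
      G.tau x < ε ∧ σ G a < σ (G.setTau x ε) a) :
    ¬ LocalFaithfulness ctrb σ := by
  intro hLF
  obtain ⟨δ, hδ, hfaith⟩ := hLF G hG hGc a ha x hx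
  obtain ⟨ε, hε, hxε, hlt⟩ := hviol δ hδ
  exact lt_asymm hlt (((hfaith ε hε).1 hneg).2 hxε)

/-- The arguments `a, b, c, d, e` of the counterexample are `0, 1, 2, 3, 4`. -/
noncomputable def witness : QBAG where
  args := {0, 1, 2, 3, 4}
  tau := fun n => if n = 0 ∨ n = 4 then 1 / 2 else 0
  att := {(2, 0), (3, 0)}
  supp := {(1, 0), (4, 1), (4, 2), (4, 3)}

theorem witness_wf : witness.WF := by
  refine ⟨by decide, by decide, by decide, fun a ha => ?_⟩
  fin_cases ha <;> norm_num [witness]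

theorem witness_acyclic : witness.Acyclic := by
  refine QBAG.acyclic_of_rank (fun n => if n = 4 then 0 else if n = 0 then 2 else 1) ?_
  rintro x y (h | h) <;> simp only [witness, mem_insert, mem_singleton, Prod.mk.injEq] at h <;>
    split_ifs <;> omega

theorem witness_setTau_half : witness.setTau 4 (1 / 2) = witness := by
  simpa [witness] using witness.setTau_tau_self 4

/-- `b, c, d` have initial strength `0` and `e` as only parent, so each of them takes the strength
`ε` of `e` if `e ∈ S`, and `0` otherwise. -/
theorem IsDF.apply_witness_setTau_restrict {σ : QBAG → ℕ → ℝ} (hσ : IsDF σ) {ε : ℝ}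
    (hε : ε ∈ Set.Icc (0 : ℝ) 1) {S : Finset ℕ} (hS : 0 ∈ S) :
    σ ((witness.setTau 4 ε).restrict S) 0 =
      iotaLin (1 / 2) ((1 - if 4 ∈ S then ε else 0) ^ #({2, 3} ∩ S) -
        (1 - if 4 ∈ S then ε else 0) ^ #({1} ∩ S)) := by
  have hH : (witness.setTau 4 ε).WF := witness_wf.setTau hε
  have hHc : (witness.setTau 4 ε).Acyclic := witness_acyclic.setTau
  have hsource (h4 : 4 ∈ S) : σ ((witness.setTau 4 ε).restrict S) 4 = ε := by
    rw [hσ.apply_restrict hH hHc (show 4 ∈ witness.args by decide) h4, QBAG.attackers_setTau,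
      QBAG.supporters_setTau, show witness.attackers 4 = ∅ by decide,
      show witness.supporters 4 = ∅ by decide]
    simp [QBAG.setTau, iotaLin_zero_right]
  have hchild : ∀ m ∈ ({1, 2, 3} : Finset ℕ), m ∈ S →
      σ ((witness.setTau 4 ε).restrict S) m = if 4 ∈ S then ε else 0 := by
    intro m hm hmS
    have hm' : m ∈ witness.args ∧ witness.tau m = 0 ∧ witness.attackers m = ∅ ∧
        witness.supporters m = {4} := by
      fin_cases hm <;> exact ⟨by decide, by simp [witness], by decide, by decide⟩
    obtain ⟨hmA, htau, hatt, hsupp⟩ := hm'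
    have hm4 : m ≠ 4 := by rintro rfl; exact absurd hm (by decide)
    rw [hσ.apply_restrict hH hHc hmA hmS, QBAG.attackers_setTau, QBAG.supporters_setTau,
      hatt, hsupp, empty_inter, prod_empty, QBAG.tau_setTau, Function.update_of_ne hm4, htau,
      iotaLin_zero_left]
    split_ifs with h4
    · rw [singleton_inter_of_mem h4, prod_singleton, hsource h4, sub_sub_cancel,
        max_eq_right hε.1]
    · rw [singleton_inter_of_notMem h4, prod_empty, sub_self, max_self]
  rw [hσ.apply_restrict hH hHc (show 0 ∈ witness.args by decide) hS, QBAG.attackers_setTau,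
    QBAG.supporters_setTau, show witness.attackers 0 = {2, 3} by decide,
    show witness.supporters 0 = {1} by decide,
    prod_eq_pow_card fun y hy => by rw [hchild y (by aesop) (mem_inter.1 hy).2],
    prod_eq_pow_card fun y hy => by rw [hchild y (by aesop) (mem_inter.1 hy).2]]
  simp [QBAG.setTau, witness]

theorem IsDF.apply_witness_setTau {σ : QBAG → ℕ → ℝ} (hσ : IsDF σ) {ε : ℝ}
    (hε : ε ∈ Set.Icc (0 : ℝ) 1) :
    σ (witness.setTau 4 ε) 0 = 3 / 8 + (ε - 1 / 2) ^ 2 / 2 := by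
  rw [← (witness_wf.setTau hε).restrict_args, QBAG.args_setTau,
    hσ.apply_witness_setTau_restrict hε (by decide), if_pos (by decide),
    show #({2, 3} ∩ witness.args) = 2 by decide, show #({1} ∩ witness.args) = 1 by decide,
    iotaLin_of_nonpos _ (by nlinarith [hε.1, hε.2])]
  ring

theorem IsDF.apply_witness {σ : QBAG → ℕ → ℝ} (hσ : IsDF σ) : σ witness 0 = 3 / 8 := by
  have h := hσ.apply_witness_setTau (ε := 1 / 2) (by norm_num)
  rw [witness_setTau_half] at h
  simpa using h

theorem IsDF.apply_witness_restrict {σ : QBAG → ℕ → ℝ} (hσ : IsDF σ) {S : Finset ℕ}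
    (hS : 0 ∈ S) :
    σ (witness.restrict S) 0 =
      iotaLin (1 / 2) ((1 - if 4 ∈ S then 1 / 2 else 0) ^ #({2, 3} ∩ S) -
        (1 - if 4 ∈ S then 1 / 2 else 0) ^ #({1} ∩ S)) := by
  have h := hσ.apply_witness_setTau_restrict (ε := 1 / 2) (by norm_num) hS
  rwa [witness_setTau_half] at h

theorem IsDF.ctrbS_witness {σ : QBAG → ℕ → ℝ} (hσ : IsDF σ) :
    ctrbS σ witness 0 4 = -1 / 12 := by
  have hterm : ∀ X ∈ ((witness.args.erase 0).erase 4).powerset,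
      σ (witness.restrict (witness.args \ X)) 0 -
        σ (witness.restrict (witness.args \ insert 4 X)) 0 =
      iotaLin (1 / 2) ((1 / 2) ^ #({2, 3} ∩ (witness.args \ X)) -
        (1 / 2) ^ #({1} ∩ (witness.args \ X))) - 1 / 2 := by
    intro X hX
    have h0 : 0 ∉ X := fun h => by simpa using mem_powerset.1 hX h
    have h4 : 4 ∉ X := fun h => by simpa using mem_powerset.1 hX h
    rw [hσ.apply_witness_restrict (by simp [witness, h0]),
      hσ.apply_witness_restrict (by simp [witness, h0]), if_pos (by simp [witness, h4]),
      if_neg (by simp)]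
    norm_num [iotaLin_zero_right]
  rw [ctrbS, sum_congr rfl fun X hX => by rw [hterm X hX],
    show ((witness.args.erase 0).erase 4).powerset =
      {∅, {1}, {2}, {3}, {1, 2}, {1, 3}, {2, 3}, {1, 2, 3}} by decide,
    show #(witness.args.erase 0) = 4 by decide]
  simp +decide [witness]
  norm_num [iotaLin, Nat.factorial]

/-- The Shapley-based contribution function violates local faithfulness
w.r.t. the DFQuAD semantics: there exist an acyclic QBAG G and a, x ∈ A with
ctrb^s_{G,a}(x) < 0 such that for every δ > 0 there is
ε ∈ [τ(x) − δ, τ(x) + δ] ∩ [0,1] with ε > τ(x) for which σ_{G[x←ε]}(a) > σ_G(a),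
violating the defining condition of local faithfulness. -/
theorem ctrbS_violates_local_faithfulness_DF
    (σ : QBAG → ℕ → ℝ) (hσ : IsDF σ) :
    ¬ LocalFaithfulness (ctrbS σ) σ ∧
    ∃ G : QBAG, G.WF ∧ G.Acyclic ∧ ∃ a ∈ G.args, ∃ x ∈ G.args,
      ctrbS σ G a x < 0 ∧
      ∀ δ > 0, ∃ ε ∈ Set.Icc (G.tau x - δ) (G.tau x + δ) ∩ Set.Icc (0 : ℝ) 1,
        G.tau x < ε ∧ σ G a < σ (G.setTau x ε) a := by
  have hneg : ctrbS σ witness 0 4 < 0 := by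
    rw [hσ.ctrbS_witness]
    norm_num
  have htau : witness.tau 4 = 1 / 2 := by simp [witness]
  have hviol : ∀ δ > 0,
      ∃ ε ∈ Set.Icc (witness.tau 4 - δ) (witness.tau 4 + δ) ∩ Set.Icc (0 : ℝ) 1,
        witness.tau 4 < ε ∧ σ witness 0 < σ (witness.setTau 4 ε) 0 := by
    intro δ hδ
    obtain ⟨ε, hε, hgt⟩ := exists_gt_mem_Icc_inter_unitInterval
      (t := witness.tau 4) (by rw [htau]; norm_num) (by rw [htau]; norm_num) hδ
    refine ⟨ε, hε, hgt, ?_⟩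
    rw [hσ.apply_witness, hσ.apply_witness_setTau hε.2]
    have := sq_pos_of_ne_zero (sub_ne_zero.2 (htau ▸ hgt).ne')
    linarith
  exact ⟨not_localFaithfulness_of_exists_violation witness_wf witness_acyclic (by decide)
      (by decide) hneg hviol,
    witness, witness_wf, witness_acyclic, 0, by decide, 4, by decide, hneg, hviol⟩
end
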